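/- Let P(m,n) = m³n³ + 15m²n² + 48mn − 27m² − 64, and for m > 0 set u(m) = 2 + m² + m√(4+m²) and g(m) = (1/(2m))·(3·2^{2/3}·u(m)^{1/3} + 6·2^{1/3}·u(m)^{−1/3} − 10). Then: (a) for every m > 0, g(m) is the unique real root of the cubic n ↦ P(m,n); (b) for all m > 0 and n > 1, P(m,n) < 0 if and only if m < 4 and n < g(m). -/

import Mathlib

/-!
In the variable `x = m n` one has `P(m, n) = (x - 1)(x + 8)² - 27 m²`. The formula for `g` is
Cardano's: with `a = (u(m)/2)^{1/3}`, `m g(m) = 3 (a + a⁻¹) - 5`, and `a³ + a⁻³ = u/2 + 2/u = 2 + m²`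
makes `t = m g(m)` a root. As `(t - 1)(t + 8)² = 27 m² > 0`, `t > 1`, so the quadratic cofactor of
`x - t` has negative discriminant: `t` is the only real root and `P(m, n)` has the sign of `m n - t`.
Finally `P(m, 1) = (m - 4)³`.
-/

/-- `P(m,n) = m³n³ + 15m²n² + 48mn − 27m² − 64`. -/
noncomputable def P (m n : ℝ) : ℝ :=
  m ^ 3 * n ^ 3 + 15 * m ^ 2 * n ^ 2 + 48 * m * n - 27 * m ^ 2 - 64

/-- `u(m) = 2 + m² + m√(4 + m²)`. -/
noncomputable def u (m : ℝ) : ℝ := 2 + m ^ 2 + m * Real.sqrt (4 + m ^ 2)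

/-- `g(m)`, the unique real root in `n` of the cubic `P(m, ·)`. -/
noncomputable def g (m : ℝ) : ℝ :=
  (1 / (2 * m)) * (3 * 2 ^ ((2 : ℝ) / 3) * u m ^ ((1 : ℝ) / 3)
    + 6 * 2 ^ ((1 : ℝ) / 3) * (u m ^ ((1 : ℝ) / 3))⁻¹ - 10)

theorem add_inv_pow_three {K : Type*} [Field K] {a : K} (ha : a ≠ 0) :
    (a + a⁻¹) ^ 3 = 3 * (a + a⁻¹) + (a ^ 3 + (a ^ 3)⁻¹) := by
  field_simp
  ring

theorem rpow_one_third_pow_three {x : ℝ} (hx : 0 ≤ x) : (x ^ ((1 : ℝ) / 3)) ^ 3 = x := by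
  simpa using Real.rpow_inv_natCast_pow (n := 3) hx three_ne_zero

section Cubic

variable {k t : ℝ}

theorem cubic_eq_sub_mul (hroot : t ^ 3 + 15 * t ^ 2 + 48 * t = k) (x : ℝ) :
    x ^ 3 + 15 * x ^ 2 + 48 * x - k
      = (x - t) * (x ^ 2 + (t + 15) * x + (t ^ 2 + 15 * t + 48)) := by
  linear_combination hroot

/-- The discriminant of this quadratic is `-3 (t - 1)(t + 11)`. -/
theorem quadratic_cofactor_pos (ht : 1 < t) (x : ℝ) :
    0 < x ^ 2 + (t + 15) * x + (t ^ 2 + 15 * t + 48) := by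
  nlinarith [sq_nonneg (2 * x + t + 15), mul_pos (sub_pos.2 ht) (by linarith : 0 < t + 11)]

variable (hroot : t ^ 3 + 15 * t ^ 2 + 48 * t = k) (ht : 1 < t)
include hroot ht

theorem cubic_neg_iff (x : ℝ) : x ^ 3 + 15 * x ^ 2 + 48 * x - k < 0 ↔ x < t := by
  rw [cubic_eq_sub_mul hroot, ← zero_mul (_ + _),
    mul_lt_mul_iff_left₀ (quadratic_cofactor_pos ht x), sub_neg]

theorem cubic_eq_zero_iff (x : ℝ) : x ^ 3 + 15 * x ^ 2 + 48 * x - k = 0 ↔ x = t := by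
  rw [cubic_eq_sub_mul hroot, mul_eq_zero, sub_eq_zero,
    or_iff_left (quadratic_cofactor_pos ht x).ne']

end Cubic

theorem P_eq_cubic (m n : ℝ) :
    P m n = (m * n) ^ 3 + 15 * (m * n) ^ 2 + 48 * (m * n) - (27 * m ^ 2 + 64) := by
  unfold P; ring

theorem P_one (m : ℝ) : P m 1 = (m - 4) ^ 3 := by
  unfold P; ring

theorem u_pos (m : ℝ) : 0 < u m := by
  have hsq : Real.sqrt (4 + m ^ 2) ^ 2 = 4 + m ^ 2 := Real.sq_sqrt (by positivity)
  have hlt : |m| < Real.sqrt (4 + m ^ 2) :=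
    abs_lt_of_sq_lt_sq (by rw [hsq]; linarith) (Real.sqrt_nonneg _)
  have hu : u m = (m + Real.sqrt (4 + m ^ 2)) ^ 2 / 2 := by
    unfold u; linear_combination -hsq / 2
  rw [hu]
  have : 0 < m + Real.sqrt (4 + m ^ 2) := by linarith [neg_abs_le m]
  positivity

/-- With `r = (m + √(4 + m²))/2` one has `u = 2 r²` and `r - r⁻¹ = m`. -/
theorem u_div_two_add_two_div_u (m : ℝ) : u m / 2 + 2 / u m = 2 + m ^ 2 := by
  have hsq : Real.sqrt (4 + m ^ 2) ^ 2 = 4 + m ^ 2 := Real.sq_sqrt (by positivity)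
  have hu := (u_pos m).ne'
  field_simp
  unfold u
  linear_combination m ^ 2 * hsq

theorem exists_mul_g_eq_cardano {m : ℝ} (hm : m ≠ 0) :
    ∃ a : ℝ, a ≠ 0 ∧ a ^ 3 = u m / 2 ∧ m * g m = 3 * (a + a⁻¹) - 5 := by
  unfold g
  set v := u m ^ ((1 : ℝ) / 3)
  set c := (2 : ℝ) ^ ((1 : ℝ) / 3)
  have hv : v ≠ 0 := (Real.rpow_pos_of_pos (u_pos m) _).ne'
  have hc : c ≠ 0 := (Real.rpow_pos_of_pos two_pos _).ne'
  have hc3 : c ^ 3 = 2 := rpow_one_third_pow_three zero_le_two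
  have hc2 : (2 : ℝ) ^ ((2 : ℝ) / 3) = c ^ 2 := by
    rw [← Real.rpow_natCast, ← Real.rpow_mul zero_le_two]; norm_num
  refine ⟨v / c, div_ne_zero hv hc, ?_, ?_⟩
  · rw [div_pow, rpow_one_third_pow_three (u_pos m).le, hc3]
  · rw [hc2]
    field_simp
    linear_combination 3 * v ^ 2 * hc3

theorem mul_g_root {m : ℝ} (hm : m ≠ 0) :
    (m * g m) ^ 3 + 15 * (m * g m) ^ 2 + 48 * (m * g m) = 27 * m ^ 2 + 64 := by
  obtain ⟨a, ha, ha3, hg⟩ := exists_mul_g_eq_cardano hm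
  have hw : (a + a⁻¹) ^ 3 = 3 * (a + a⁻¹) + (2 + m ^ 2) := by
    rw [add_inv_pow_three ha, ha3, inv_div, u_div_two_add_two_div_u]
  rw [hg]
  linear_combination 27 * hw

theorem one_lt_mul_g {m : ℝ} (hm : m ≠ 0) : 1 < m * g m := by
  have hroot := mul_g_root hm
  have hfac : (m * g m - 1) * (m * g m + 8) ^ 2 = 27 * m ^ 2 := by linear_combination hroot
  have hpos : 0 < (m * g m - 1) * (m * g m + 8) ^ 2 := by rw [hfac]; positivity
  nlinarith [sq_nonneg (m * g m + 8)]

theorem P_neg_iff_lt_g {m : ℝ} (hm : 0 < m) (n : ℝ) : P m n < 0 ↔ n < g m := by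
  rw [P_eq_cubic, cubic_neg_iff (mul_g_root hm.ne') (one_lt_mul_g hm.ne'),
    mul_lt_mul_iff_right₀ hm]

theorem P_eq_zero_iff_eq_g {m : ℝ} (hm : 0 < m) (n : ℝ) : P m n = 0 ↔ n = g m := by
  rw [P_eq_cubic, cubic_eq_zero_iff (mul_g_root hm.ne') (one_lt_mul_g hm.ne'),
    mul_right_inj' hm.ne']

/-- (a) For `m > 0`, `g(m)` is the unique real root of `n ↦ P(m,n)`;
(b) for `m > 0` and `n > 1`, `P(m,n) < 0` iff `m < 4` and `n < g(m)`. -/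
theorem g_unique_root_and_P_neg_iff :
    (∀ m : ℝ, 0 < m → P m (g m) = 0 ∧ ∀ n : ℝ, P m n = 0 → n = g m) ∧
    (∀ m n : ℝ, 0 < m → 1 < n → (P m n < 0 ↔ m < 4 ∧ n < g m)) := by
  refine ⟨fun m hm => ⟨(P_eq_zero_iff_eq_g hm _).2 rfl, fun n => (P_eq_zero_iff_eq_g hm n).1⟩, ?_⟩
  intro m n hm hn
  rw [P_neg_iff_lt_g hm]
  refine ⟨fun hlt => ⟨?_, hlt⟩, And.right⟩
  have hP1 : P m 1 < 0 := (P_neg_iff_lt_g hm 1).2 (hn.trans hlt)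
  rw [P_one, Odd.pow_neg_iff (by decide), sub_neg] at hP1
  exact hP1
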